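/- There is an isomorphism of ℤ₃-algebras ℤ₃[A₄] ≅ ℤ₃[C₃] × Mat₃(ℤ₃), where C₃ is the cyclic group of order 3. -/

import Mathlib

/-!
Let `π : A₄ → C₃` be the quotient by the Klein four-group `V`, and `ρ` the representation of
`A₄` by signed permutation matrices on the span of the three vectors that are `1` on one block
of a pairing of `{0,1,2,3}` and `-1` on the other. Once `2` is invertible, the algebra map
`g ↦ (π g, ρ g)` is onto: the averaging idempotent of `V` maps to `(1, 0)`, and every matrix
unit is `ρ(c) (1 + ρ(v)) / 2` for some `c ∈ A₄`, `v ∈ V`. Both sides are free of rank `12`, so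
a surjection between them is bijective.
-/

open Equiv

/-- `A₄`, the alternating group on 4 letters. -/
abbrev A4 : Type := alternatingGroup (Fin 4)

/-- The cyclic group of order 3. -/
abbrev C3 : Type := Multiplicative (ZMod 3)

theorem AlgHom.surjective_of_fst_snd_surjective {R A B C : Type*} [CommSemiring R] [Ring A]
    [Ring B] [Ring C] [Algebra R A] [Algebra R B] [Algebra R C] (f : A →ₐ[R] B × C)
    (h₁₀ : (1, 0) ∈ Set.range f) (hB : Function.Surjective ((AlgHom.fst R B C).comp f))
    (hC : Function.Surjective ((AlgHom.snd R B C).comp f)) : Function.Surjective f := by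
  obtain ⟨e, he⟩ := h₁₀
  rintro ⟨b, c⟩
  obtain ⟨a, rfl⟩ := hB b
  obtain ⟨a', rfl⟩ := hC c
  refine ⟨e * a + (1 - e) * a', ?_⟩
  simp [he, Prod.ext_iff]

theorem Matrix.surjective_of_single_one_mem_range {R M m n : Type*} [Semiring R]
    [AddCommMonoid M] [Module R M] [Fintype m] [Fintype n] [DecidableEq m] [DecidableEq n]
    (f : M →ₗ[R] Matrix m n R) (h : ∀ i j, Matrix.single i j 1 ∈ Set.range f) :
    Function.Surjective f := by
  intro X
  choose a ha using h
  refine ⟨∑ i, ∑ j, X i j • a i j, ?_⟩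
  simp only [map_sum, map_smul, ha, Matrix.smul_single, smul_eq_mul, mul_one]
  exact (Matrix.matrix_eq_sum_single X).symm

theorem LinearMap.bijective_of_surjective_of_basis_equiv {R M N ι κ : Type*} [CommRing R]
    [AddCommMonoid M] [Module R M] [AddCommMonoid N] [Module R N] [Finite κ]
    (b : Module.Basis ι R M) (c : Module.Basis κ R N) (e : ι ≃ κ) (f : M →ₗ[R] N)
    (hf : Function.Surjective f) : Function.Bijective f :=
  have : Module.Finite R N := .of_basis c
  OrzechProperty.bijective_of_surjective_of_injective _ f (b.equiv c e).injective hf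

theorem MonoidAlgebra.mapDomain_surjective {R M N : Type*} [Semiring R] {f : M → N}
    (hf : Function.Surjective f) : Function.Surjective (MonoidAlgebra.mapDomain (R := R) f) :=
  fun x =>
    let ⟨y, hy⟩ := Finsupp.mapDomain_surjective hf x.coeff
    ⟨.ofCoeff y, by ext; simp [hy]⟩

namespace A4

def pairingSign (k : Fin 3) (i : Fin 4) : ℤ := if i = 0 ∨ i = k.succ then 1 else -1

/-- The vectors `pairingSign k` are pairwise orthogonal of square length `4` and every `σ ∈ S₄`
permutes them up to sign, so the division is exact and this is the matrix of `σ` on their span. -/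
def pairingRepZ : Perm (Fin 4) →* Matrix (Fin 3) (Fin 3) ℤ where
  toFun σ := Matrix.of fun j k => (∑ i, pairingSign j (σ i) * pairingSign k i) / 4
  map_one' := by decide
  map_mul' := by decide

/-- With `xor`, `Fin 4` is a Klein four-group whose nonzero elements label the three pairings;
`σ 0 ^^^ σ 1` labels the image of the pairing `{0,1}|{2,3}`, and `A₄` rotates the pairings. -/
def toC3 : A4 →* C3 where
  toFun σ := Multiplicative.ofAdd (((σ.1 0 : ℕ) ^^^ (σ.1 1 : ℕ) : ℕ) - 1)
  map_one' := by decide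
  map_mul' := by decide

theorem toC3_surjective : Function.Surjective toC3 := by decide

def kleinFour : Finset A4 := Finset.univ.filter (toC3 · = 1)

theorem card_kleinFour : kleinFour.card = 4 := by decide

theorem sum_kleinFour_pairingRepZ : ∑ g ∈ kleinFour, pairingRepZ g.1 = 0 := by decide

/-- `g` is a power of the 3-cycle `(1 2 3)`, which acts by a cyclic permutation matrix, and `h` a
double transposition, which acts by `2 • single k k 1 - 1`. -/
theorem exists_pairingRepZ_mul_eq_single (j k : Fin 3) :
    ∃ g h : A4, pairingRepZ g.1 * (1 + pairingRepZ h.1) = Matrix.single j k 2 := by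
  revert j k
  decide

variable (R : Type*) [CommRing R]

noncomputable def pairingRep : A4 →* Matrix (Fin 3) (Fin 3) R :=
  (Int.castRingHom R).mapMatrix.toMonoidHom.comp
    (pairingRepZ.comp (alternatingGroup (Fin 4)).subtype)

theorem pairingRep_apply (g : A4) :
    pairingRep R g = (Int.castRingHom R).mapMatrix (pairingRepZ g.1) := rfl

noncomputable def toProd :
    MonoidAlgebra R A4 →ₐ[R] MonoidAlgebra R C3 × Matrix (Fin 3) (Fin 3) R :=
  (MonoidAlgebra.mapDomainAlgHom R R toC3).prod (MonoidAlgebra.lift R _ A4 (pairingRep R))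

theorem toProd_sum_kleinFour : toProd R (∑ g ∈ kleinFour, MonoidAlgebra.of R A4 g) = (4, 0) := by
  simp only [toProd, map_sum, AlgHom.prod_apply, MonoidAlgebra.mapDomainAlgHom_apply,
    MonoidAlgebra.of_apply, MonoidAlgebra.mapDomain_single, MonoidAlgebra.lift_single, one_smul]
  refine Prod.ext ?_ ?_
  · rw [Prod.fst_sum, Finset.sum_congr rfl fun g hg => by rw [(Finset.mem_filter.1 hg).2],
      Finset.sum_const, card_kleinFour]
    simp [MonoidAlgebra.ofNat_def]
  · simp only [Prod.snd_sum, pairingRep_apply, ← map_sum, sum_kleinFour_pairingRepZ, map_zero]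

theorem single_mem_range_lift_pairingRep [Invertible (2 : R)] (j k : Fin 3) :
    Matrix.single j k 1 ∈ Set.range (MonoidAlgebra.lift R _ A4 (pairingRep R)) := by
  obtain ⟨g, h, hgh⟩ := exists_pairingRepZ_mul_eq_single j k
  refine ⟨⅟(2 : R) • (MonoidAlgebra.of R A4 g * (1 + MonoidAlgebra.of R A4 h)), ?_⟩
  simp only [map_smul, map_mul, map_add, map_one, MonoidAlgebra.lift_of, pairingRep_apply]
  rw [← map_one (Int.castRingHom R).mapMatrix, ← map_add, ← map_mul, hgh, RingHom.mapMatrix_apply,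
    Matrix.map_single, Matrix.smul_single]
  simp

theorem toProd_surjective [Invertible (2 : R)] : Function.Surjective (toProd R) := by
  refine (toProd R).surjective_of_fst_snd_surjective
    ⟨⅟(2 : R) • ⅟(2 : R) • ∑ g ∈ kleinFour, MonoidAlgebra.of R A4 g, ?_⟩ ?_ ?_
  · have h4 : ⅟(2 : R) * (⅟(2 : R) * 4) = 1 := by
      simp [show (4 : R) = 2 * 2 by norm_num, ← mul_assoc]
    rw [map_smul, map_smul, toProd_sum_kleinFour]
    simp [Prod.smul_mk, MonoidAlgebra.ofNat_def, MonoidAlgebra.smul_single, h4,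
      MonoidAlgebra.one_def]
  · rw [toProd, AlgHom.fst_prod]
    exact MonoidAlgebra.mapDomain_surjective toC3_surjective
  · rw [toProd, AlgHom.snd_prod]
    exact Matrix.surjective_of_single_one_mem_range
      (MonoidAlgebra.lift R _ A4 (pairingRep R)).toLinearMap (single_mem_range_lift_pairingRep R)

noncomputable def monoidAlgebraEquivProd [Invertible (2 : R)] :
    MonoidAlgebra R A4 ≃ₐ[R] MonoidAlgebra R C3 × Matrix (Fin 3) (Fin 3) R :=
  .ofBijective (toProd R) <|
    (toProd R).toLinearMap.bijective_of_surjective_of_basis_equiv (MonoidAlgebra.basis A4 R)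
      ((MonoidAlgebra.basis C3 R).prod (Matrix.stdBasis R (Fin 3) (Fin 3)))
      (Fintype.equivOfCardEq rfl) (toProd_surjective R)

end A4

/-- There is an isomorphism of `ℤ₃`-algebras `ℤ₃[A₄] ≅ ℤ₃[C₃] × Mat₃(ℤ₃)`. -/
theorem padic3_group_algebra_A4_iso :
    Nonempty (MonoidAlgebra ℤ_[3] A4 ≃ₐ[ℤ_[3]]
      MonoidAlgebra ℤ_[3] C3 × Matrix (Fin 3) (Fin 3) ℤ_[3]) := by
  have two_isUnit : IsUnit (2 : ℤ_[3]) := by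
    rw [PadicInt.isUnit_iff]
    exact_mod_cast PadicInt.norm_natCast_eq_one_iff.2 (by decide : Nat.Coprime 3 2)
  let := two_isUnit.invertible
  exact ⟨A4.monoidAlgebraEquivProd ℤ_[3]⟩
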